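/- Let e be a nonnegative integer, r = 2^(2e+1), and let p be a prime dividing r^2 + 1. Then p ≤ 3r. -/

import Mathlib

/-! With `s = 2 ^ (e + 1)` we have `s ^ 2 = 2 * r`, so `r ^ 2 + 1 = (r + 1) ^ 2 - s ^ 2` factors as
`(r + 1 - s) * (r + 1 + s)` (the Sophie Germain identity). A prime divisor of `r ^ 2 + 1` divides one
of the two positive factors, hence is at most `r + 1 + s ≤ 3 * r`. -/

namespace Nat

variable {R s : ℕ}

lemma lt_add_one_of_sq_eq_two_mul (h : s ^ 2 = 2 * R) : s < R + 1 := by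
  nlinarith

lemma sq_add_one_eq_mul_of_sq_eq_two_mul (h : s ^ 2 = 2 * R) :
    R ^ 2 + 1 = (R + 1 - s) * (R + 1 + s) := by
  zify [(lt_add_one_of_sq_eq_two_mul h).le] at h ⊢
  linear_combination h

lemma Prime.le_or_le_of_dvd_mul {p a b : ℕ} (hp : p.Prime) (ha : 0 < a) (hb : 0 < b)
    (h : p ∣ a * b) : p ≤ a ∨ p ≤ b :=
  (hp.dvd_mul.mp h).imp (Nat.le_of_dvd ha) (Nat.le_of_dvd hb)

lemma Prime.le_of_dvd_sq_add_one_of_sq_eq_two_mul {p : ℕ} (hp : p.Prime) (h : s ^ 2 = 2 * R)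
    (hdvd : p ∣ R ^ 2 + 1) : p ≤ R + 1 + s := by
  rw [sq_add_one_eq_mul_of_sq_eq_two_mul h] at hdvd
  have hlt := lt_add_one_of_sq_eq_two_mul h
  rcases hp.le_or_le_of_dvd_mul (by omega) (by omega) hdvd with hle | hle <;> omega

end Nat

theorem suzuki_prime_bound (e : ℕ) (r : ℕ) (hr : r = 2 ^ (2 * e + 1)) (p : ℕ)
    (hp : p.Prime) (hdvd : p ∣ r ^ 2 + 1) : p ≤ 3 * r := by
  have hsq : (2 ^ (e + 1)) ^ 2 = 2 * r := by rw [hr, ← pow_mul, ← pow_succ']; ring_nf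
  have hs : 2 ^ (e + 1) ≤ r := hr ▸ Nat.pow_le_pow_right two_pos (by omega)
  have hr1 : 1 ≤ r := hr ▸ Nat.one_le_two_pow
  have := hp.le_of_dvd_sq_add_one_of_sq_eq_two_mul hsq hdvd
  omega
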